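/- Let F be the T-character of the length-k one-leg fixed point: F = \sum_{j=-k}^{\infty} t_1^j (formally, t_1^{-k}/(1-t_1)). Then F \cdot (1-t_1)(1-t_2)(1-t_3) = t_1^{-k}(1-t_2)(1-t_3), and the generating function of descendent weights satisfies \sum_{i \geq -2} W^P_{(1),\emptyset,\emptyset}(\tau_i) z^{2+i} = (1 - e^{z s_2})(1 - e^{z s_3}) \exp(-z s_1 q \frac{d}{dq}) [(1+q)^{(s_2+s_3)/s_1}], where \tau_i inserts ch_{2+i} of t_1^{-k}(1-t_2)(1-t_3) into the weight of Q^k. -/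

import Mathlib

/-!
Read off the `q^k` coefficient of both sides as a power series in `z`. Since `q d/dq` acts on
`q^k` by `k`, the operator `exp(-z s₁ q d/dq)` acts on it by `e^{-kzs₁}`, so the right side gives
`binom((s₂+s₃)/s₁, k)·(1-e^{zs₂})(1-e^{zs₃})e^{-kzs₁}`, which is the left side's coefficient.
The character identity only needs `1 - t₁ ≠ 0` in `ℚ(t₁,t₂,t₃)`.
-/

noncomputable section

open MvPolynomial PowerSeries

/-- The field `ℚ(s₁,s₂,s₃)` (also used as `ℚ(t₁,t₂,t₃)` in the character identity). -/
abbrev K := FractionRing (MvPolynomial (Fin 3) ℚ)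

/-- The equivariant parameters (resp. torus characters). -/
def s (i : Fin 3) : K := algebraMap (MvPolynomial (Fin 3) ℚ) K (X i)

/-- The generalized binomial coefficient `binom(x,k)`. -/
def rchoose (x : K) (k : ℕ) : K :=
  (∏ i ∈ Finset.range k, (x - (i : K))) / (Nat.factorial k : K)

/-- The exponential `e^{zc}` as a power series in `z`. -/
def expS (c : K) : PowerSeries K :=
  PowerSeries.mk fun l => c ^ l / (Nat.factorial l : K)

/-- The operator `q d/dq` on power series in `q`. -/
def qddq (G : PowerSeries K) : PowerSeries K :=
  PowerSeries.mk fun k => (k : K) * PowerSeries.coeff (R := K) k G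

/-- `(1+q)^{(s₂+s₃)/s₁} = ∑_k binom((s₂+s₃)/s₁, k) q^k`, the one-leg vertex series. -/
def GF : PowerSeries K := PowerSeries.mk (rchoose ((s 1 + s 2) / s 0))

/-- The Chern character series `ch(t₁^{-k}(1-t₂)(1-t₃)) = e^{-kzs₁}(1-e^{zs₂})(1-e^{zs₃})`
as a power series in `z`. -/
def chSeries (k : ℕ) : PowerSeries K :=
  (1 - expS (s 1)) * (1 - expS (s 2)) * expS (-(k : K) * s 0)

/-- The left side `∑_{i≥-2} W^P_{(1),∅,∅}(τ_i) z^{2+i}`: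
the `z^l q^k` coefficient is `w(Q^k)·ch_l(t₁^{-k}(1-t₂)(1-t₃))`. -/
def LHS : PowerSeries (PowerSeries K) :=
  PowerSeries.mk fun l => PowerSeries.mk fun k =>
    rchoose ((s 1 + s 2) / s 0) k * PowerSeries.coeff (R := K) l (chSeries k)

/-- The right side `(1-e^{zs₂})(1-e^{zs₃})·exp(-z s₁ q d/dq)[(1+q)^{(s₂+s₃)/s₁}]`. -/
def RHS : PowerSeries (PowerSeries K) :=
  (PowerSeries.map (PowerSeries.C (R := K)) ((1 - expS (s 1)) * (1 - expS (s 2)))) *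
    PowerSeries.mk fun l => ((-(s 0)) ^ l / (Nat.factorial l : K)) • (qddq^[l] GF)

section qCoeff

variable {R : Type*} [CommSemiring R]

def qCoeff (k : ℕ) (H : PowerSeries (PowerSeries R)) : PowerSeries R :=
  PowerSeries.mk fun l => PowerSeries.coeff k (PowerSeries.coeff l H)

theorem coeff_qCoeff (k l : ℕ) (H : PowerSeries (PowerSeries R)) :
    PowerSeries.coeff l (qCoeff k H) = PowerSeries.coeff k (PowerSeries.coeff l H) :=
  PowerSeries.coeff_mk _ _

theorem ext_qCoeff {H₁ H₂ : PowerSeries (PowerSeries R)} (h : ∀ k, qCoeff k H₁ = qCoeff k H₂) :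
    H₁ = H₂ := by
  ext l k
  rw [← coeff_qCoeff, ← coeff_qCoeff, h]

theorem qCoeff_map_C_mul (k : ℕ) (A : PowerSeries R) (H : PowerSeries (PowerSeries R)) :
    qCoeff k (PowerSeries.map PowerSeries.C A * H) = A * qCoeff k H := by
  ext l
  rw [coeff_qCoeff, PowerSeries.coeff_mul, map_sum, PowerSeries.coeff_mul]
  refine Finset.sum_congr rfl fun p _ => ?_
  rw [PowerSeries.coeff_map, PowerSeries.coeff_C_mul, coeff_qCoeff]

end qCoeff

def expQddq (c : K) (G : PowerSeries K) : PowerSeries (PowerSeries K) :=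
  PowerSeries.mk fun l => (c ^ l / (Nat.factorial l : K)) • (qddq^[l] G)

theorem coeff_qddq_iterate (n k : ℕ) (G : PowerSeries K) :
    PowerSeries.coeff k (qddq^[n] G) = (k : K) ^ n * PowerSeries.coeff k G := by
  induction n with
  | zero => simp
  | succ n ih =>
    rw [Function.iterate_succ_apply', qddq, PowerSeries.coeff_mk, ih, pow_succ]
    ring

theorem qCoeff_expQddq (c : K) (G : PowerSeries K) (k : ℕ) :
    qCoeff k (expQddq c G) = PowerSeries.coeff k G • expS (k * c) := by
  ext l
  rw [coeff_qCoeff, expQddq, PowerSeries.coeff_mk, PowerSeries.coeff_smul, coeff_qddq_iterate,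
    PowerSeries.coeff_smul, expS, PowerSeries.coeff_mk, smul_eq_mul, smul_eq_mul]
  ring

theorem qCoeff_LHS (k : ℕ) :
    qCoeff k LHS = rchoose ((s 1 + s 2) / s 0) k • chSeries k := by
  ext l
  rw [coeff_qCoeff, LHS, PowerSeries.coeff_mk, PowerSeries.coeff_mk, PowerSeries.coeff_smul,
    smul_eq_mul]

theorem RHS_eq_map_mul_expQddq :
    RHS = PowerSeries.map PowerSeries.C ((1 - expS (s 1)) * (1 - expS (s 2))) *
      expQddq (-(s 0)) GF :=
  rfl

theorem one_sub_s_ne_zero (i : Fin 3) : 1 - s i ≠ 0 := by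
  rw [s, ← map_one (algebraMap (MvPolynomial (Fin 3) ℚ) K), ← map_sub, Ne,
    IsFractionRing.to_map_eq_zero_iff]
  intro h
  simpa using congrArg MvPolynomial.constantCoeff h

theorem descendent_vertex_one_leg :
    (∀ k : ℕ,
      (s 0 ^ (-(k : ℤ)) / (1 - s 0)) * ((1 - s 0) * (1 - s 1) * (1 - s 2)) =
        s 0 ^ (-(k : ℤ)) * ((1 - s 1) * (1 - s 2))) ∧
    LHS = RHS := by
  refine ⟨fun k => ?_, ext_qCoeff fun k => ?_⟩
  · rw [mul_assoc (1 - s 0), ← mul_assoc, div_mul_cancel₀ _ (one_sub_s_ne_zero 0)]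
  · rw [qCoeff_LHS, RHS_eq_map_mul_expQddq, qCoeff_map_C_mul, qCoeff_expQddq, GF,
      PowerSeries.coeff_mk, chSeries, mul_smul_comm, mul_neg, neg_mul]

end
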